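/- Let n ≥ 2 and let M be a swap Kripke pre-model for C_nᴰ whose valuations satisfy the restrictions (i) v^n_w(α) = t^n_0 implies v^n_w(α ∧ ¬α) = T_n and (ii) for 1 ≤ k ≤ n−1, v^n_w(α) = t^n_k implies v^n_w(α ∧ ¬α) ∈ I_n and v^n_w(α¹) = t^n_{k−1}. Then for every world w and every formula α: v^n_w(α^{(n)}) ∈ D_n if and only if v^n_w(α) ∈ Boo_n. -/

import Mathlib

/-- Formulas over the signature Σ₁ᴰ = {∧, ∨, →, ¬, O}, with countably many
propositional variables. -/
inductive Form : Type
  | var : ℕ → Form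
  | and : Form → Form → Form
  | or : Form → Form → Form
  | imp : Form → Form → Form
  | neg : Form → Form
  | obl : Form → Form

namespace Form

/-- α⁰ = α, α^{k+1} = ¬(α^k ∧ ¬α^k). -/
def pow (α : Form) : ℕ → Form
  | 0 => α
  | k + 1 => ((α.pow k).and (α.pow k).neg).neg

/-- α^{(n)} = α¹ ∧ … ∧ αⁿ (for n ≥ 1). -/
def bigPow (α : Form) : ℕ → Form
  | 0 => α.pow 1
  | 1 => α.pow 1
  | m + 2 => (α.bigPow (m + 1)).and (α.pow (m + 2))

/-- ∼^{(n)}α := ¬α ∧ α^{(n)}. -/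
def snn (n : ℕ) (α : Form) : Form := α.neg.and (α.bigPow n)

end Form

/-- The n+2 snapshots of the swap structure for C_nᴰ: T_n, t^n_0, …, t^n_{n-1}, F_n. -/
inductive SVn (n : ℕ) : Type
  | T : SVn n
  | t : Fin n → SVn n
  | F : SVn n
deriving DecidableEq

namespace SVn

/-- The coordinates of a snapshot, as an element of 2^{n+1} (0-indexed):
T_n = (1,0,1,…,1), t^n_i has its unique 0 at (0-indexed) position i+2
(so t^n_{n-1} = (1,…,1)), and F_n = (0,1,…,1). -/
def coord {n : ℕ} : SVn n → Fin (n + 1) → Bool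
  | .T, j => decide (j.val ≠ 1)
  | .t i, j => decide (j.val ≠ i.val + 2)
  | .F, j => decide (j.val ≠ 0)

/-- First coordinate z₁. -/
def p1 {n : ℕ} (z : SVn n) : Bool := z.coord 0

/-- Second coordinate z₂. -/
def p2 {n : ℕ} (z : SVn n) : Bool := z.coord 1

/-- Designated values D_n = A_n ∖ {F_n}, i.e. first coordinate 1. -/
def desig {n : ℕ} (z : SVn n) : Prop := z.p1 = true

/-- Boolean values Boo_n = {T_n, F_n}. -/
def boo {n : ℕ} (z : SVn n) : Prop := z = SVn.T ∨ z = SVn.F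

/-- Inconsistent values I_n = A_n ∖ Boo_n. -/
def incons {n : ℕ} (z : SVn n) : Prop := ∃ i : Fin n, z = SVn.t i

end SVn

/-- Boolean implication a ⊃ b. -/
def boolImp (a b : Bool) : Bool := !a || b

/-- Membership of c in a #̃ b for a binary connective # with Boolean counterpart
`op`: c₁ = a₁ op b₁, and moreover c ∈ Boo_n whenever a, b ∈ Boo_n. -/
def opCond {n : ℕ} (op : Bool → Bool → Bool) (c a b : SVn n) : Prop :=
  c.p1 = op a.p1 b.p1 ∧ (a.boo → b.boo → c.boo)

/-- Swap Kripke pre-model conditions for C_nᴰ on a serial frame (W,R) with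
valuations v_w : Form → A_n. -/
structure IsPreModelCnD (n : ℕ) {W : Type} (R : W → W → Prop)
    (v : W → Form → SVn n) : Prop where
  serial : ∀ w, ∃ w', R w w'
  and_ : ∀ w α β, opCond (· && ·) (v w (α.and β)) (v w α) (v w β)
  or_ : ∀ w α β, opCond (· || ·) (v w (α.or β)) (v w α) (v w β)
  imp_ : ∀ w α β, opCond boolImp (v w (α.imp β)) (v w α) (v w β)
  neg_ : ∀ w α, (v w α.neg).p1 = (v w α).p2 ∧ (v w α.neg).p2 ≤ (v w α).p1
  obl_ : ∀ w α, ((v w α.obl).p1 = true ↔ ∀ w', R w w' → (v w' α).p1 = true)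

/-- The RNmatrix restrictions on valuations:
(i) v_w(α) = t^n_0 implies v_w(α ∧ ¬α) = T_n;
(ii) for 1 ≤ k ≤ n−1, v_w(α) = t^n_k implies v_w(α ∧ ¬α) ∈ I_n and
v_w(α¹) = t^n_{k−1}. -/
def RestrCnD (n : ℕ) {W : Type} (v : W → Form → SVn n) : Prop :=
  (∀ (w : W) (α : Form) (h0 : 0 < n),
      v w α = SVn.t ⟨0, h0⟩ → v w (α.and α.neg) = SVn.T) ∧
  (∀ (w : W) (α : Form) (k : ℕ) (hk : k < n), 1 ≤ k → v w α = SVn.t ⟨k, hk⟩ →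
      (v w (α.and α.neg)).incons ∧ v w (α.pow 1) = SVn.t ⟨k - 1, by omega⟩)

/-- A swap Kripke model for C_nᴰ: a pre-model satisfying the restrictions (i), (ii)
and (iii): v_w(α) ∈ Boo_n implies v_w(Oα) ∈ Boo_n. -/
structure IsModelCnD (n : ℕ) {W : Type} (R : W → W → Prop)
    (v : W → Form → SVn n) : Prop where
  pre : IsPreModelCnD n R v
  restr : RestrCnD n v
  booObl : ∀ w α, (v w α).boo → (v w α.obl).boo

/-!
On a Boolean value the formula `α ∧ ¬α` is forced to be false, so `α¹ = ¬(α ∧ ¬α)` is the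
classical true value `T`, and then so is every `αᵏ` with `k ≥ 1`: the conjunction `α^{(n)}` is
designated. On an inconsistent value `t^n_k`, restriction (ii) lowers the index under `α ↦ α¹`
until restriction (i) makes `α^{k+1}` false; as `k + 1 ≤ n`, this false value is one of the
conjuncts of `α^{(n)}`.
-/

namespace Form

theorem pow_succ' (α : Form) (k : ℕ) : α.pow (k + 1) = (α.pow 1).pow k := by
  induction k with
  | zero => rfl
  | succ k ih => exact congrArg (fun β => (β.and β.neg).neg) ih

theorem bigPow_succ (α : Form) {m : ℕ} (hm : 1 ≤ m) :
    α.bigPow (m + 1) = (α.bigPow m).and (α.pow (m + 1)) := by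
  obtain ⟨m, rfl⟩ := Nat.exists_eq_add_of_le' hm
  rfl

end Form

namespace SVn

variable {n : ℕ}

@[simp] theorem p1_T : (T : SVn n).p1 = true := rfl

@[simp] theorem p1_t (i : Fin n) : (t i).p1 = true := rfl

@[simp] theorem p1_F : (F : SVn n).p1 = false := rfl

theorem p2_T (hn : 0 < n) : (T : SVn n).p2 = false := by
  simp [p2, coord]
  omega

theorem p2_t (i : Fin n) : (t i).p2 = true := by
  have := i.pos
  simp [p2, coord, Nat.mod_eq_of_lt (show 1 < n + 1 by omega)]

theorem p2_F (hn : 0 < n) : (F : SVn n).p2 = true := by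
  simp [p2, coord]
  omega

theorem desig_iff_ne_F {z : SVn n} : z.desig ↔ z ≠ F := by
  cases z <;> simp [desig]

theorem eq_F_of_p1_eq_false {z : SVn n} (h : z.p1 = false) : z = F := by
  by_contra hz
  simp [← desig_iff_ne_F, desig, h] at hz

theorem eq_T_of_p2_eq_false {z : SVn n} (h1 : z.p1 = true) (h2 : z.p2 = false) : z = T := by
  cases z with
  | T => rfl
  | t i => simp [p2_t] at h2
  | F => simp at h1

end SVn

open SVn

namespace IsPreModelCnD

variable {n : ℕ} {W : Type} {R : W → W → Prop} {v : W → Form → SVn n}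

theorem desig_and (hM : IsPreModelCnD n R v) (w : W) (α β : Form) :
    (v w (α.and β)).desig ↔ (v w α).desig ∧ (v w β).desig := by
  simp [desig, (hM.and_ w α β).1]

theorem desig_bigPow_iff (hM : IsPreModelCnD n R v) (w : W) (α : Form) {m : ℕ} (hm : 1 ≤ m) :
    (v w (α.bigPow m)).desig ↔ ∀ j, 1 ≤ j → j ≤ m → (v w (α.pow j)).desig := by
  induction m, hm using Nat.le_induction with
  | base =>
    refine ⟨fun h j hj hj' => ?_, fun h => h 1 le_rfl le_rfl⟩
    obtain rfl : j = 1 := by omega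
    exact h
  | succ m hm ih =>
    rw [Form.bigPow_succ α hm, hM.desig_and, ih]
    constructor
    · rintro ⟨h, hlast⟩ j hj hj'
      rcases Nat.lt_or_eq_of_le hj' with hlt | rfl
      · exact h j hj (by omega)
      · exact hlast
    · intro h
      exact ⟨fun j hj hj' => h j hj (by omega), h _ (by omega) le_rfl⟩

theorem and_neg_eq_F_of_boo (hM : IsPreModelCnD n R v) (hn : 0 < n) (w : W) {α : Form}
    (h : (v w α).boo) : v w (α.and α.neg) = F := by
  apply eq_F_of_p1_eq_false
  rw [(hM.and_ w α α.neg).1, (hM.neg_ w α).1]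
  rcases h with h | h <;> simp [h, p2_T hn]

theorem pow_one_eq_T_of_boo (hM : IsPreModelCnD n R v) (hn : 0 < n) (w : W) {α : Form}
    (h : (v w α).boo) : v w (α.pow 1) = T := by
  show v w (α.and α.neg).neg = T
  have hneg := hM.neg_ w (α.and α.neg)
  rw [hM.and_neg_eq_F_of_boo hn w h, p2_F hn, p1_F] at hneg
  exact eq_T_of_p2_eq_false hneg.1 (Bool.eq_false_of_le_false hneg.2)

theorem pow_succ_eq_T_of_boo (hM : IsPreModelCnD n R v) (hn : 0 < n) (w : W) {α : Form}
    (h : (v w α).boo) (k : ℕ) : v w (α.pow (k + 1)) = T := by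
  induction k with
  | zero => exact hM.pow_one_eq_T_of_boo hn w h
  | succ k ih => exact hM.pow_one_eq_T_of_boo hn w (α := α.pow (k + 1)) (Or.inl ih)

theorem pow_one_eq_F_of_eq_t_zero (hM : IsPreModelCnD n R v) (hR : RestrCnD n v) (hn : 0 < n)
    (w : W) {α : Form} (h : v w α = t ⟨0, hn⟩) : v w (α.pow 1) = F := by
  have hneg := (hM.neg_ w (α.and α.neg)).1
  rw [hR.1 w α hn h, p2_T hn] at hneg
  exact eq_F_of_p1_eq_false hneg

theorem pow_succ_eq_F_of_eq_t (hM : IsPreModelCnD n R v) (hR : RestrCnD n v) (w : W) (k : ℕ)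
    (hk : k < n) {α : Form} (h : v w α = t ⟨k, hk⟩) : v w (α.pow (k + 1)) = F := by
  induction k generalizing α with
  | zero => exact hM.pow_one_eq_F_of_eq_t_zero hR hk w h
  | succ k ih =>
    rw [Form.pow_succ']
    exact ih (by omega) (hR.2 w α (k + 1) hk (by omega) h).2

end IsPreModelCnD

/-- In any swap Kripke pre-model for C_nᴰ (n ≥ 2) satisfying the restrictions
(i) and (ii): v^n_w(α^{(n)}) ∈ D_n iff v^n_w(α) ∈ Boo_n. -/
theorem CnD_bigPow_boo (n : ℕ) (hn : 2 ≤ n) {W : Type} (R : W → W → Prop)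
    (v : W → Form → SVn n) (hM : IsPreModelCnD n R v) (hR : RestrCnD n v) :
    ∀ (w : W) (α : Form), (v w (α.bigPow n)).desig ↔ (v w α).boo := by
  intro w α
  rw [hM.desig_bigPow_iff w α (by omega)]
  constructor
  · intro hdesig
    cases hα : v w α with
    | T => exact Or.inl rfl
    | F => exact Or.inr rfl
    | t i =>
      have hF := hM.pow_succ_eq_F_of_eq_t hR w i.val i.isLt hα
      exact absurd hF (desig_iff_ne_F.mp (hdesig _ (by omega) i.isLt))
  · intro hboo j hj _
    obtain ⟨k, rfl⟩ := Nat.exists_eq_add_of_le' hj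
    rw [hM.pow_succ_eq_T_of_boo (by omega) w hboo k]
    exact p1_T
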